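/- arXiv:2309.16630 — 3 statements merged into one kernel-verified Lean document; each statement's English description precedes it below -/
import Mathlib

section
/- For every positive integer N, if n = 2 + 2^(N-1), then there exists a subset S of {0,1}^n with |S| = N that is shattered by the class H_n of cubic monomials; moreover the shattering can be achieved using only monomials of the form x_1 ∧ x_2 ∧ x_m^a with 3 ≤ m ≤ n and a ∈ {0,1}. -/
/-!
All sample points have `x₀ = x₁ = 1`, so on them `x₀ ∧ x₁ ∧ x_m^a` is just the literal `x_m^a`.
Point `P₀` is constantly `1` on the coordinates `m ≥ 2`, and `P_t` (`t ≥ 1`) carries there the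
binary digit `t - 1` of `m - 2`. Hence the columns `m ≥ 2` realise every labelling of
`P₀, …, P_{N-1}` that sends `P₀` to `1`, and choosing `a` to be the label of `P₀` reaches all the
others.
-/

/-- `h : {0,1}^n → {0,1}` is a cubic monomial: `h x = x_i^a ∧ x_j^b ∧ x_k^c`
for some `i < j < k` and exponents `a b c`, where `x^1 = x`, `x^0 = 1 - x`
(so the literal `x_i^a` is true iff `x i = a`). -/
def IsCubicMonomial (n : ℕ) (h : (Fin n → Bool) → Bool) : Prop :=
  ∃ (i j k : Fin n) (a b c : Bool), i < j ∧ j < k ∧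
    ∀ x, h x = ((x i == a) && (x j == b) && (x k == c))

/-- The class `H_n` of cubic monomials on `{0,1}^n`. -/
def cubicMonomials (n : ℕ) : Set ((Fin n → Bool) → Bool) :=
  {h | IsCubicMonomial n h}

/-- A class `H` of Boolean functions shatters a finite set `S` if every
labeling of `S` is realized by some member of `H`. -/
def Shatters {α : Type*} (H : Set (α → Bool)) (S : Finset α) : Prop :=
  ∀ y : α → Bool, ∃ h ∈ H, ∀ x ∈ S, h x = y x

theorem Shatters.mono {α : Type*} {H H' : Set (α → Bool)} {S : Finset α} (hHH' : H ⊆ H')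
    (hH : Shatters H S) : Shatters H' S := fun y ↦
  let ⟨h, hh, hy⟩ := hH y
  ⟨h, hHH' hh, hy⟩

def pairAndLiterals (n : ℕ) (hn : 2 < n) : Set ((Fin n → Bool) → Bool) :=
  {h | ∃ (m : Fin n) (a : Bool), 2 ≤ (m : ℕ) ∧
    ∀ x, h x = (x ⟨0, by omega⟩ && x ⟨1, by omega⟩ && (x m == a))}

theorem pairAndLiterals_subset_cubicMonomials (n : ℕ) (hn : 2 < n) :
    pairAndLiterals n hn ⊆ cubicMonomials n := by
  rintro h ⟨m, a, hm, hh⟩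
  refine ⟨⟨0, by omega⟩, ⟨1, by omega⟩, m, true, true, a, by simp [Fin.lt_def],
    by simp [Fin.lt_def]; omega, fun x ↦ ?_⟩
  simp [hh]

def samplePoint (n t : ℕ) (m : Fin n) : Bool :=
  if (m : ℕ) < 2 ∨ t = 0 then true else (m - 2 : ℕ).testBit (t - 1)

theorem exists_column_eq {N n : ℕ} (hn : 2 + 2 ^ (N - 1) ≤ n) (y : ℕ → Bool) :
    ∃ (m : Fin n) (a : Bool), 2 ≤ (m : ℕ) ∧ ∀ t < N, (samplePoint n t m == a) = y t := by
  set bits : ℕ := Nat.ofBits fun i : Fin (N - 1) ↦ y (i + 1) == y 0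
  have hbits : bits < 2 ^ (N - 1) := Nat.ofBits_lt_two_pow _
  refine ⟨⟨2 + bits, by omega⟩, y 0, by simp, fun t ht ↦ ?_⟩
  rcases Nat.eq_zero_or_pos t with rfl | ht0
  · simp [samplePoint]
  · have hcol : samplePoint n t ⟨2 + bits, by omega⟩ = (y t == y 0) := by
      simp only [samplePoint, if_neg (show ¬(2 + bits < 2 ∨ t = 0) by omega),
        Nat.add_sub_cancel_left, bits, Nat.testBit_ofBits_lt _ _ (show t - 1 < N - 1 by omega)]
      rw [Nat.sub_add_cancel ht0]
    rw [hcol]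
    cases y t <;> cases y 0 <;> rfl

theorem samplePoint_injOn {N n : ℕ} (hn : 2 + 2 ^ (N - 1) ≤ n) :
    Set.InjOn (samplePoint n) (Finset.range N) := by
  intro t ht t' ht' htt'
  by_contra hne
  obtain ⟨m, a, -, hm⟩ := exists_column_eq hn (· == t)
  have h₁ := hm t (by simpa using ht)
  have h₂ := hm t' (by simpa using ht')
  simp only [htt', beq_self_eq_true, beq_eq_false_iff_ne.mpr (Ne.symm hne)] at h₁ h₂
  exact Bool.false_ne_true (h₂.symm.trans h₁)

theorem shatters_image_samplePoint {N n : ℕ} (hn : 2 + 2 ^ (N - 1) ≤ n) :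
    Shatters (pairAndLiterals n (by have := Nat.one_le_two_pow (n := N - 1); omega))
      ((Finset.range N).image (samplePoint n)) := by
  intro y
  obtain ⟨m, a, hm, hcol⟩ := exists_column_eq hn fun t ↦ y (samplePoint n t)
  refine ⟨fun x ↦ x ⟨0, _⟩ && x ⟨1, _⟩ && (x m == a), ⟨m, a, hm, fun _ ↦ rfl⟩, ?_⟩
  simp only [Finset.mem_image, Finset.mem_range]
  rintro _ ⟨t, ht, rfl⟩
  simpa [samplePoint] using hcol t ht

/-- For every positive `N`, if `n = 2 + 2^(N-1)` then there is a subset `S ⊆ {0,1}^n`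
of cardinality `N` shattered by the class of cubic monomials; moreover the shattering
is achieved using only monomials of the form `x_1 ∧ x_2 ∧ x_m^a` with `3 ≤ m ≤ n`
(indices written 0-based: `x_1, x_2` are coordinates `0, 1` and `m` has `2 ≤ m < n`). -/
theorem stmt0 (N : ℕ) (n : ℕ) (hn : n = 2 + 2 ^ (N - 1)) :
    ∃ S : Finset (Fin n → Bool), S.card = N ∧
      Shatters (cubicMonomials n) S ∧
      Shatters {h : (Fin n → Bool) → Bool |
        ∃ (m : Fin n) (a : Bool), 2 ≤ (m : ℕ) ∧
          ∀ x, h x = (x ⟨0, by subst hn; have : 0 < 2 ^ (N-1) := Nat.pow_pos (by norm_num : 0 < 2); omega⟩ && x ⟨1, by subst hn; have : 0 < 2 ^ (N-1) := Nat.pow_pos (by norm_num : 0 < 2); omega⟩ && (x m == a))} S := by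
  have hS := shatters_image_samplePoint hn.ge
  exact ⟨_, (Finset.card_image_of_injOn (samplePoint_injOn hn.ge)).trans (Finset.card_range N),
    hS.mono (pairAndLiterals_subset_cubicMonomials n _), hS⟩
end

section
/- For every integer n ≥ 3, the VC dimension of the class H_n of cubic monomials on {0,1}^n is at least ⌊log₂(n - 2)⌋ + 1. -/
/-- The VC dimension of a class of Boolean functions: the largest cardinality
of a shattered subset of the domain. -/
noncomputable def VCDim {α : Type*} (H : Set (α → Bool)) : ℕ :=
  sSup {N | ∃ S : Finset α, Shatters H S ∧ S.card = N}

/-! Take `d + 1` points with `2 ^ d ≤ n - 2`, all with `x₀ = x₁ = 1`, whose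
coordinate `2 + k` is bit `t` of `k` in the `t`-th point. On these points the monomial
`x₀ ∧ x₁ ∧ x_{2+k}^c` is the labeling `t ↦ (bit t of k) == c`. Every labeling has this form:
pick `c` opposite to the label of the last point (whose bit is always `0`, as `k < 2 ^ d`)
and let the remaining `d` labels, compared with `c`, spell out `k` in binary. -/

section VCDim

variable {α ι : Type*} (H : Set (α → Bool))

def ShattersFamily (p : ι → α) : Prop :=
  ∀ y : ι → Bool, ∃ h ∈ H, ∀ i, h (p i) = y i

variable {H}

theorem ShattersFamily.injective {p : ι → α} (hp : ShattersFamily H p) :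
    Function.Injective p := by
  classical
  intro i j hij
  obtain ⟨h, -, hh⟩ := hp (fun k => decide (k = j))
  have hi := hh i
  rw [hij, hh j] at hi
  simpa using hi.symm

theorem ShattersFamily.shatters_image [DecidableEq α] [Fintype ι] {p : ι → α}
    (hp : ShattersFamily H p) : Shatters H (Finset.univ.image p) := by
  intro y
  obtain ⟨h, hH, hh⟩ := hp (y ∘ p)
  refine ⟨h, hH, ?_⟩
  simp only [Finset.mem_image, Finset.mem_univ, true_and, forall_exists_index,
    forall_apply_eq_imp_iff]
  exact hh

theorem Shatters.card_le_VCDim [Finite α] {S : Finset α} (hS : Shatters H S) :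
    S.card ≤ VCDim H := by
  have := Fintype.ofFinite α
  refine le_csSup ⟨Fintype.card α, ?_⟩ ⟨S, hS, rfl⟩
  rintro N ⟨T, -, rfl⟩
  exact Finset.card_le_univ T

theorem ShattersFamily.card_le_VCDim [Finite α] [Fintype ι] {p : ι → α}
    (hp : ShattersFamily H p) : Fintype.card ι ≤ VCDim H := by
  classical
  simpa [Finset.card_image_of_injective _ hp.injective] using hp.shatters_image.card_le_VCDim

end VCDim

theorem Nat.exists_lt_two_pow_testBit_beq {d : ℕ} (y : Fin (d + 1) → Bool) :
    ∃ k < 2 ^ d, ∃ c : Bool, ∀ t : Fin (d + 1), (k.testBit t == c) = y t := by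
  set c := !y (Fin.last d)
  refine ⟨Nat.ofBits fun s => y s.castSucc == c, Nat.ofBits_lt_two_pow _, c, ?_⟩
  refine Fin.lastCases ?_ (fun s => ?_)
  · simp [c]
  · simp only [Nat.testBit_ofBits, Fin.val_castSucc, s.isLt, dite_true]
    cases y s.castSucc <;> cases c <;> rfl

def bitPoint (m d : ℕ) (t : Fin (d + 1)) : Fin (m + 2) → Bool :=
  Fin.cons true (Fin.cons true fun k => (k : ℕ).testBit t)

theorem isCubicMonomial_zero_one_literal {m : ℕ} (k : Fin m) (c : Bool) :
    IsCubicMonomial (m + 2) fun x => x 0 && x 1 && (x k.succ.succ == c) :=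
  ⟨0, 1, k.succ.succ, true, true, c, by simp, by simp [Fin.lt_def],
    fun x => by simp⟩

theorem shattersFamily_cubicMonomials_bitPoint {m d : ℕ} (hd : 2 ^ d ≤ m) :
    ShattersFamily (cubicMonomials (m + 2)) (bitPoint m d) := by
  intro y
  obtain ⟨k, hk, c, hkc⟩ := Nat.exists_lt_two_pow_testBit_beq y
  refine ⟨_, isCubicMonomial_zero_one_literal ⟨k, by omega⟩ c, fun t => ?_⟩
  simpa only [bitPoint, Fin.cons_zero, Fin.cons_one, Fin.cons_succ, Bool.true_and] using hkc t

/-- For every `n ≥ 3`, the VC dimension of the class of cubic monomials on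
`{0,1}^n` is at least `⌊log₂ (n - 2)⌋ + 1`. -/
theorem stmt1 (n : ℕ) (hn : 3 ≤ n) :
    Nat.log 2 (n - 2) + 1 ≤ VCDim (cubicMonomials n) := by
  obtain ⟨m, rfl⟩ : ∃ m, n = m + 2 := ⟨n - 2, by omega⟩
  have hm : 2 ^ Nat.log 2 m ≤ m := Nat.pow_log_le_self 2 (by omega)
  simpa using (shattersFamily_cubicMonomials_bitPoint hm).card_le_VCDim
end

section
/- Let t be a positive integer and let n be an integer with ⌊n/t⌋ ≥ 3. Partition the n coordinates into t pairwise disjoint blocks each containing at least ⌊n/t⌋ coordinates. Then the class H_n^(t) of DNFs with t cubic terms shatters a set of size t · (⌊log₂(⌊n/t⌋ - 2)⌋ + 1); consequently the VC dimension of H_n^(t) is at least t · (⌊log₂(⌊n/t⌋ - 2)⌋ + 1). -/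
/-- The class `H_n^(t)` of DNFs consisting of `t` distinct cubic monomials in
`n` variables: Boolean functions expressible as the pointwise disjunction of a
set of `t` distinct cubic monomials. -/
def dnfCubic (n t : ℕ) : Set ((Fin n → Bool) → Bool) :=
  {h | ∃ T : Finset ((Fin n → Bool) → Bool), T.card = t ∧
        (∀ g ∈ T, IsCubicMonomial n g) ∧
        ∀ x, (h x = true ↔ ∃ g ∈ T, g x = true)}

/-! Split the coordinates into `t` blocks of `m = ⌊n/t⌋` consecutive coordinates. The point
`(j, s)` is `1` on the first two coordinates of block `j`, carries bit `s` of `r` at its coordinate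
`r + 2`, and vanishes off block `j`. The monomial `x_{j,0} ∧ x_{j,1} ∧ x_{j,r+2}^c` vanishes on the
points of the other blocks and labels `(j, s)` by `bit_s(r) == c`. A number `r < m - 2` only
realizes bit patterns of length `d = ⌊log₂(m - 2)⌋ + 1` with top bit `0`, but the free sign `c`
flips the whole pattern, so every labelling of the `d` points of a block is realized; one monomial
per block then shatters all `t · d` points. -/

open Function Finset

namespace Nat

theorem exists_lt_two_pow_testBit_eq : ∀ {d : ℕ} (f : Fin d → Bool),
    ∃ r < 2 ^ d, ∀ s : Fin d, r.testBit s = f s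
  | 0, _ => ⟨0, by simp, fun s => s.elim0⟩
  | d + 1, f => by
    obtain ⟨r, hr, hbits⟩ := exists_lt_two_pow_testBit_eq (Fin.tail f)
    refine ⟨bit (f 0) r, bit_lt_two_pow_succ_iff.2 hr, Fin.cases ?_ fun s => ?_⟩
    · simp
    · simpa [testBit_bit_succ, Fin.tail] using hbits s

theorem exists_lt_testBit_beq_eq {d k : ℕ} (hk : 2 ^ (d - 1) ≤ k) (y : Fin d → Bool) :
    ∃ r < k, ∃ c : Bool, ∀ s : Fin d, (r.testBit s == c) = y s := by
  cases d with
  | zero => exact ⟨0, (Nat.two_pow_pos _).trans_le hk, true, fun s => s.elim0⟩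
  | succ d =>
    obtain ⟨r, hr, hbits⟩ :=
      exists_lt_two_pow_testBit_eq fun s : Fin d => y s.castSucc == !y (Fin.last d)
    refine ⟨r, hr.trans_le hk, !y (Fin.last d), Fin.lastCases ?_ fun s => ?_⟩
    · simp [testBit_lt_two_pow hr]
    · simp [hbits s]

end Nat

theorem mem_dnfCubic_of_injective {ι : Type*} [Fintype ι] {n : ℕ}
    (g : ι → (Fin n → Bool) → Bool) (hg : ∀ j, IsCubicMonomial n (g j)) (hinj : Injective g) :
    (fun x => decide (∃ j, g j x = true)) ∈ dnfCubic n (Fintype.card ι) := by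
  classical
  refine ⟨univ.image g, ?_, ?_, fun x => ?_⟩
  · rw [card_image_of_injective _ hinj, card_univ]
  · simpa using hg
  · simp

section Blocks

variable {ι : Type*} {n k : ℕ} {e : ι × Fin (k + 2) → Fin n}

variable (e) in
def blockMonomial (j : ι) (r : Fin k) (c : Bool) : (Fin n → Bool) → Bool :=
  fun x => (x (e (j, 0)) == true) && (x (e (j, 1)) == true) && (x (e (j, r.succ.succ)) == c)

theorem isCubicMonomial_blockMonomial (he : ∀ j, StrictMono fun o => e (j, o)) (j : ι)
    (r : Fin k) (c : Bool) : IsCubicMonomial n (blockMonomial e j r c) :=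
  ⟨_, _, _, true, true, c, he j Fin.zero_lt_one, he j (by simp [Fin.lt_def]), fun _ => rfl⟩

variable [DecidableEq ι]

variable (e) in
noncomputable def blockVector (j : ι) (v : Fin (k + 2) → Bool) : Fin n → Bool :=
  extend e (fun p => decide (p.1 = j) && v p.2) fun _ => false

def anchored (f : Fin k → Bool) : Fin (k + 2) → Bool :=
  Fin.cons true (Fin.cons true f)

theorem blockMonomial_blockVector_anchored (he : Injective e) (j j' : ι) (r : Fin k) (c : Bool)
    (f : Fin k → Bool) :
    blockMonomial e j r c (blockVector e j' (anchored f)) = (decide (j = j') && (f r == c)) := by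
  by_cases h : j = j' <;> simp [blockMonomial, blockVector, anchored, he.extend_apply, h]

theorem blockMonomial_ne (he : Injective e) {j j' : ι} (h : j ≠ j') (r r' : Fin k) (c c' : Bool) :
    blockMonomial e j r c ≠ blockMonomial e j' r' c' := fun heq => by
  simpa [blockMonomial_blockVector_anchored he, h.symm] using
    congrFun heq (blockVector e j (anchored fun _ => c))

variable (e) in
noncomputable def blockPoint (j : ι) (s : ℕ) : Fin n → Bool :=
  blockVector e j (anchored fun r => r.1.testBit s)

theorem exists_mem_dnfCubic_blockPoint_eq [Fintype ι] (he : Injective e)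
    (hmono : ∀ j, StrictMono fun o => e (j, o)) {d : ℕ} (hk : 2 ^ (d - 1) ≤ k)
    (y : ι × Fin d → Bool) :
    ∃ h ∈ dnfCubic n (Fintype.card ι), ∀ p : ι × Fin d, h (blockPoint e p.1 p.2) = y p := by
  choose r hr c hc using fun j => Nat.exists_lt_testBit_beq_eq hk fun s => y (j, s)
  refine ⟨_, mem_dnfCubic_of_injective (fun j => blockMonomial e j ⟨r j, hr j⟩ (c j))
    (fun j => isCubicMonomial_blockMonomial hmono _ _ _)
    fun j j' h => Classical.byContradiction fun hne => blockMonomial_ne he hne _ _ _ _ h, ?_⟩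
  rintro ⟨j, s⟩
  simp [blockPoint, blockMonomial_blockVector_anchored he, hc]

end Blocks

def blockEmbedding {t m n : ℕ} (h : t * m ≤ n) (p : Fin t × Fin m) : Fin n :=
  Fin.castLE h (finProdFinEquiv p)

theorem blockEmbedding_injective {t m n : ℕ} (h : t * m ≤ n) : Injective (blockEmbedding h) :=
  (Fin.castLE_injective h).comp finProdFinEquiv.injective

theorem blockEmbedding_strictMono {t m n : ℕ} (h : t * m ≤ n) (j : Fin t) :
    StrictMono fun o => blockEmbedding h (j, o) := fun a b hab => by
  change (a : ℕ) + m * j < b + m * j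
  exact Nat.add_lt_add_right hab _

theorem exists_shatters_card_eq {α ι : Type*} [Fintype ι] {H : Set (α → Bool)} (x : ι → α)
    (hx : ∀ y : ι → Bool, ∃ h ∈ H, ∀ i, h (x i) = y i) :
    ∃ S : Finset α, Shatters H S ∧ S.card = Fintype.card ι := by
  classical
  have hinj : Injective x := fun a b hab => by
    obtain ⟨h, -, hh⟩ := hx fun i => decide (i = b)
    simpa [hab, hh b] using hh a
  refine ⟨univ.image x, fun y => ?_, by rw [card_image_of_injective _ hinj, card_univ]⟩
  obtain ⟨h, hH, hh⟩ := hx (y ∘ x)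
  exact ⟨h, hH, by simpa using hh⟩

theorem Shatters.card_le_vcDim {α : Type*} [Fintype α] {H : Set (α → Bool)} {S : Finset α}
    (hS : Shatters H S) : S.card ≤ VCDim H :=
  le_csSup ⟨Fintype.card α, by rintro _ ⟨T, -, rfl⟩; exact card_le_univ T⟩ ⟨S, hS, rfl⟩

theorem stmt7_general (n t : ℕ) (hnt : 3 ≤ n / t) :
    (∃ S : Finset (Fin n → Bool), Shatters (dnfCubic n t) S ∧
      S.card = t * (Nat.log 2 (n / t - 2) + 1)) ∧
    t * (Nat.log 2 (n / t - 2) + 1) ≤ VCDim (dnfCubic n t) := by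
  set k := n / t - 2
  have hblocks : t * (k + 2) ≤ n := by
    rw [Nat.sub_add_cancel (by omega)]
    exact Nat.mul_div_le n t
  have hk : 2 ^ (Nat.log 2 k + 1 - 1) ≤ k := Nat.pow_log_le_self 2 (by omega)
  obtain ⟨S, hS, hcard⟩ := exists_shatters_card_eq _ <|
    exists_mem_dnfCubic_blockPoint_eq (blockEmbedding_injective hblocks)
      (blockEmbedding_strictMono hblocks) hk
  simp only [Fintype.card_prod, Fintype.card_fin] at hS hcard
  exact ⟨⟨S, hS, hcard⟩, hcard ▸ hS.card_le_vcDim⟩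

/-- For `t ≥ 1` and `⌊n/t⌋ ≥ 3` (splitting the `n` coordinates into `t` disjoint
blocks of at least `⌊n/t⌋` coordinates each), the class `H_n^(t)` of DNFs with `t`
cubic terms shatters a set of size `t · (⌊log₂(⌊n/t⌋ - 2)⌋ + 1)`; consequently its
VC dimension is at least `t · (⌊log₂(⌊n/t⌋ - 2)⌋ + 1)`. -/
theorem stmt7 (n t : ℕ) (ht : 0 < t) (hnt : 3 ≤ n / t) :
    (∃ S : Finset (Fin n → Bool), Shatters (dnfCubic n t) S ∧
      S.card = t * (Nat.log 2 (n / t - 2) + 1)) ∧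
    t * (Nat.log 2 (n / t - 2) + 1) ≤ VCDim (dnfCubic n t) :=
  stmt7_general n t hnt
end
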